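/- arXiv:math/0603153 — 6 statements merged into one kernel-verified Lean document; each statement's English description precedes it below -/
import Mathlib

section
/- The function f(z) = sin(z) satisfies the sigma-function identity: for all complex x, y, z, w, sin(x)sin(y)sin(z)sin(w) = sin((x+y+z-w)/2)sin((x+y-z+w)/2)sin((x-y+z+w)/2)sin((-x+y+z+w)/2) + sin((x+y+z+w)/2)sin((x+y-z-w)/2)sin((x-y+z-w)/2)sin((x-y-z+w)/2). -/
/-! By the product-to-sum formula each of the three products pairs into
`(cos (p - q) - cos (p + q)) (cos (r - s) - cos (r + s)) / 4`, and with
`A = cos (x - y)`, `B = cos (x + y)`, `C = cos (z - w)`, `D = cos (z + w)` the identity becomes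
`(A - B) (C - D) = (C - B) (A - D) + (D - B) (C - A)`, which holds in any commutative ring. -/

open Complex

theorem Complex.sin_mul_sin (a b : ℂ) : sin a * sin b = (cos (a - b) - cos (a + b)) / 2 := by
  rw [cos_sub, cos_add]
  ring

theorem Complex.sin_mul_sin_mul_sin_mul_sin (a b c d : ℂ) :
    sin a * sin b * sin c * sin d =
      (cos (a - b) - cos (a + b)) * (cos (c - d) - cos (c + d)) / 4 := by
  rw [mul_assoc _ (sin c), sin_mul_sin, sin_mul_sin]
  ring

theorem stmt_1 : ∀ x y z w : ℂ,
    sin x * sin y * sin z * sin w =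
      sin ((x+y+z-w)/2) * sin ((x+y-z+w)/2) * sin ((x-y+z+w)/2) * sin ((-x+y+z+w)/2) +
      sin ((x+y+z+w)/2) * sin ((x+y-z-w)/2) * sin ((x-y+z-w)/2) * sin ((x-y-z+w)/2) := by
  intro x y z w
  simp only [sin_mul_sin_mul_sin_mul_sin]
  ring_nf
end

section
/- If an entire function f : ℂ → ℂ satisfies the sigma-function identity, then so does g(z) = f(az)·e^{αz² + β} for any complex constants a, α, β. -/
/-! The identity is homogeneous of degree four in `f` and each of its three terms evaluates `f` at
four points that are linear in `x, y, z, w`. Rescaling the variable therefore commutes with forming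
the eight half-sums, and a Gaussian factor `exp (α u ^ 2 + β)` contributes the same factor
`exp (α (x² + y² + z² + w²) + 4β)` to all three terms, because the sum of the squares of the four
points is `x² + y² + z² + w²` in each term. -/

section SigmaIdentity

variable {K : Type*} [Field K]

def SigmaIdentity (f : K → K) : Prop :=
  ∀ x y z w : K,
    f x * f y * f z * f w -
      f ((x+y+z-w)/2) * f ((x+y-z+w)/2) * f ((x-y+z+w)/2) * f ((-x+y+z+w)/2) -
      f ((x+y+z+w)/2) * f ((x+y-z-w)/2) * f ((x-y+z-w)/2) * f ((x-y-z+w)/2) = 0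

theorem SigmaIdentity.comp_mul_left {f : K → K} (hf : SigmaIdentity f) (a : K) :
    SigmaIdentity (fun u => f (a * u)) := by
  intro x y z w
  simpa only [← mul_div_assoc, mul_add, mul_sub, mul_neg] using hf (a * x) (a * y) (a * z) (a * w)

theorem SigmaIdentity.mul_of_prod_eq {f e : K → K} (hf : SigmaIdentity f)
    (he₁ : ∀ x y z w : K, e ((x+y+z-w)/2) * e ((x+y-z+w)/2) * e ((x-y+z+w)/2) * e ((-x+y+z+w)/2) =
      e x * e y * e z * e w)
    (he₂ : ∀ x y z w : K, e ((x+y+z+w)/2) * e ((x+y-z-w)/2) * e ((x-y+z-w)/2) * e ((x-y-z+w)/2) =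
      e x * e y * e z * e w) :
    SigmaIdentity (fun u => f u * e u) := by
  intro x y z w
  have regroup : ∀ p q r s : K, f p * e p * (f q * e q) * (f r * e r) * (f s * e s) =
      f p * f q * f r * f s * (e p * e q * e r * e s) := fun _ _ _ _ => by ring
  simp only [regroup]
  rw [he₁, he₂, ← sub_mul, ← sub_mul, hf x y z w, zero_mul]

theorem sum_sq_halfSums_left [CharZero K] (x y z w : K) :
    ((x+y+z-w)/2)^2 + ((x+y-z+w)/2)^2 + ((x-y+z+w)/2)^2 + ((-x+y+z+w)/2)^2 =
      x^2 + y^2 + z^2 + w^2 := by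
  ring

theorem sum_sq_halfSums_right [CharZero K] (x y z w : K) :
    ((x+y+z+w)/2)^2 + ((x+y-z-w)/2)^2 + ((x-y+z-w)/2)^2 + ((x-y-z+w)/2)^2 =
      x^2 + y^2 + z^2 + w^2 := by
  ring

end SigmaIdentity

open Complex

theorem Complex.exp_quadratic_mul_four (α β p q r s : ℂ) :
    exp (α * p^2 + β) * exp (α * q^2 + β) * exp (α * r^2 + β) * exp (α * s^2 + β) =
      exp (α * (p^2 + q^2 + r^2 + s^2) + 4 * β) := by
  simp only [← exp_add]
  congr 1
  ring

theorem SigmaIdentity.mul_exp_quadratic {f : ℂ → ℂ} (hf : SigmaIdentity f) (α β : ℂ) :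
    SigmaIdentity (fun u => f u * exp (α * u ^ 2 + β)) :=
  hf.mul_of_prod_eq
    (fun x y z w => by simp only [exp_quadratic_mul_four, sum_sq_halfSums_left])
    (fun x y z w => by simp only [exp_quadratic_mul_four, sum_sq_halfSums_right])

theorem stmt_2_general (f : ℂ → ℂ)
    (hid : ∀ x y z w : ℂ,
      f x * f y * f z * f w -
        f ((x+y+z-w)/2) * f ((x+y-z+w)/2) * f ((x-y+z+w)/2) * f ((-x+y+z+w)/2) -
        f ((x+y+z+w)/2) * f ((x+y-z-w)/2) * f ((x-y+z-w)/2) * f ((x-y-z+w)/2) = 0)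
    (a α β : ℂ) :
    ∀ x y z w : ℂ,
      (fun u => f (a * u) * exp (α * u ^ 2 + β)) x *
        (fun u => f (a * u) * exp (α * u ^ 2 + β)) y *
        (fun u => f (a * u) * exp (α * u ^ 2 + β)) z *
        (fun u => f (a * u) * exp (α * u ^ 2 + β)) w -
      (fun u => f (a * u) * exp (α * u ^ 2 + β)) ((x+y+z-w)/2) *
        (fun u => f (a * u) * exp (α * u ^ 2 + β)) ((x+y-z+w)/2) *
        (fun u => f (a * u) * exp (α * u ^ 2 + β)) ((x-y+z+w)/2) *
        (fun u => f (a * u) * exp (α * u ^ 2 + β)) ((-x+y+z+w)/2) -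
      (fun u => f (a * u) * exp (α * u ^ 2 + β)) ((x+y+z+w)/2) *
        (fun u => f (a * u) * exp (α * u ^ 2 + β)) ((x+y-z-w)/2) *
        (fun u => f (a * u) * exp (α * u ^ 2 + β)) ((x-y+z-w)/2) *
        (fun u => f (a * u) * exp (α * u ^ 2 + β)) ((x-y-z+w)/2) = 0 :=
  ((show SigmaIdentity f from hid).comp_mul_left a).mul_exp_quadratic α β

theorem stmt_2 (f : ℂ → ℂ) (hf : Differentiable ℂ f)
    (hid : ∀ x y z w : ℂ,
      f x * f y * f z * f w -
        f ((x+y+z-w)/2) * f ((x+y-z+w)/2) * f ((x-y+z+w)/2) * f ((-x+y+z+w)/2) -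
        f ((x+y+z+w)/2) * f ((x+y-z-w)/2) * f ((x-y+z-w)/2) * f ((x-y-z+w)/2) = 0)
    (a α β : ℂ) :
    ∀ x y z w : ℂ,
      (fun u => f (a * u) * exp (α * u ^ 2 + β)) x *
        (fun u => f (a * u) * exp (α * u ^ 2 + β)) y *
        (fun u => f (a * u) * exp (α * u ^ 2 + β)) z *
        (fun u => f (a * u) * exp (α * u ^ 2 + β)) w -
      (fun u => f (a * u) * exp (α * u ^ 2 + β)) ((x+y+z-w)/2) *
        (fun u => f (a * u) * exp (α * u ^ 2 + β)) ((x+y-z+w)/2) *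
        (fun u => f (a * u) * exp (α * u ^ 2 + β)) ((x-y+z+w)/2) *
        (fun u => f (a * u) * exp (α * u ^ 2 + β)) ((-x+y+z+w)/2) -
      (fun u => f (a * u) * exp (α * u ^ 2 + β)) ((x+y+z+w)/2) *
        (fun u => f (a * u) * exp (α * u ^ 2 + β)) ((x+y-z-w)/2) *
        (fun u => f (a * u) * exp (α * u ^ 2 + β)) ((x-y+z-w)/2) *
        (fun u => f (a * u) * exp (α * u ^ 2 + β)) ((x-y-z+w)/2) = 0 :=
  stmt_2_general f hid a α β
end

section
/- If f is a nonzero odd entire function satisfying (f'(0))³ f(2z) = f(z)³f'''(z) - 3f(z)²f'(z)f''(z) + 2f(z)f'(z)³ for all z ∈ ℂ, then f'(0) ≠ 0. -/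
/-!
With the Euler operator `θ f (z) = z f'(z)`, the expression `E(f) = f³f''' - 3f²f'f'' + 2f f'³`
satisfies `z³ E(f) = P(f, θf, θ²f, θ³f)` for a form `P` homogeneous of degree 4.
If `f = z^m g` near `0` with `m ≥ 1` and `g(0) ≠ 0`, then `θⁱ f = z^m gᵢ` with `gᵢ(0) = mⁱ g(0)`,
so `z³ E(f) = z^{4m} P(g, g₁, g₂, g₃)` where `P(g, g₁, g₂, g₃)(0) = 2m g(0)⁴ ≠ 0`. Hence `E(f)` does
not vanish identically near a zero of a nonzero analytic function. An odd `f` vanishes at `0`, and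
`f'(0) = 0` would turn the differential equation into `E(f) = 0`.
-/

open Filter Topology

variable {𝕜 : Type*} [NontriviallyNormedField 𝕜]

noncomputable def eulerOp (f : 𝕜 → 𝕜) (z : 𝕜) : 𝕜 := z * deriv f z

/-- Equals `f⁴ (log f)'''` wherever `f ≠ 0`. -/
noncomputable def thirdLogDerivNumerator (f : 𝕜 → 𝕜) (z : 𝕜) : 𝕜 :=
  f z ^ 3 * iteratedDeriv 3 f z - 3 * f z ^ 2 * deriv f z * iteratedDeriv 2 f z +
    2 * f z * deriv f z ^ 3

def eulerForm (a b c d : 𝕜) : 𝕜 :=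
  a ^ 3 * (d - 3 * c + 2 * b) - 3 * a ^ 2 * b * (c - b) + 2 * a * b ^ 3

lemma eulerForm_smul (t a b c d : 𝕜) :
    eulerForm (t * a) (t * b) (t * c) (t * d) = t ^ 4 * eulerForm a b c d := by
  unfold eulerForm; ring

lemma eulerForm_iterate_mul (m c : 𝕜) :
    eulerForm c (m * c) (m * (m * c)) (m * (m * (m * c))) = 2 * m * c ^ 4 := by
  unfold eulerForm; ring

lemma Filter.EventuallyEq.eulerOp {f g : 𝕜 → 𝕜} {z : 𝕜} (h : f =ᶠ[𝓝 z] g) :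
    _root_.eulerOp f =ᶠ[𝓝 z] _root_.eulerOp g := by
  filter_upwards [h.deriv] with w hw
  rw [_root_.eulerOp, _root_.eulerOp, hw]

lemma AnalyticAt.eulerOp [CompleteSpace 𝕜] {f : 𝕜 → 𝕜} {z : 𝕜} (hf : AnalyticAt 𝕜 f z) :
    AnalyticAt 𝕜 (_root_.eulerOp f) z :=
  analyticAt_id.mul hf.deriv

lemma eulerOp_pow_mul {g : 𝕜 → 𝕜} {z : 𝕜} (m : ℕ) (hg : DifferentiableAt 𝕜 g z) :
    eulerOp (fun w => w ^ m * g w) z = z ^ m * (m * g z + eulerOp g z) := by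
  rw [eulerOp, eulerOp, deriv_fun_mul (differentiableAt_pow _) hg, deriv_pow_field]
  rcases m with _ | m
  · simp
  · rw [Nat.add_sub_cancel]; ring

lemma deriv_eulerOp {f : 𝕜 → 𝕜} {z : 𝕜} (hf : DifferentiableAt 𝕜 (deriv f) z) :
    deriv (eulerOp f) z = deriv f z + z * deriv (deriv f) z := by
  rw [show eulerOp f = fun w => w * deriv f w from rfl, deriv_fun_mul differentiableAt_fun_id hf,
    deriv_id'', one_mul]

section CompleteSpace

variable [CompleteSpace 𝕜]

lemma eulerOp_eulerOp_eq {f : 𝕜 → 𝕜} {z : 𝕜} (hf : AnalyticAt 𝕜 f z) :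
    eulerOp (eulerOp f) z = z * deriv f z + z ^ 2 * iteratedDeriv 2 f z := by
  rw [eulerOp, deriv_eulerOp hf.deriv.differentiableAt, iteratedDeriv_succ, iteratedDeriv_one]
  ring

lemma eulerOp_eulerOp_eulerOp_eq {f : 𝕜 → 𝕜} {z : 𝕜} (hf : AnalyticAt 𝕜 f z) :
    eulerOp (eulerOp (eulerOp f)) z =
      z * deriv f z + 3 * z ^ 2 * iteratedDeriv 2 f z + z ^ 3 * iteratedDeriv 3 f z := by
  have h2 : eulerOp (eulerOp f) =ᶠ[𝓝 z] fun w => w * deriv f w + w ^ 2 * deriv (deriv f) w := by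
    filter_upwards [hf.eventually_analyticAt] with w hw
    rw [eulerOp_eulerOp_eq hw, iteratedDeriv_succ, iteratedDeriv_one]
  have hf1 := hf.deriv.differentiableAt
  have hf2 := hf.deriv.deriv.differentiableAt
  rw [eulerOp, h2.deriv_eq, deriv_fun_add (differentiableAt_fun_id.fun_mul hf1)
      ((differentiableAt_pow 2).fun_mul hf2), deriv_fun_mul differentiableAt_fun_id hf1,
    deriv_fun_mul (differentiableAt_pow 2) hf2, deriv_id'', deriv_pow_field]
  simp only [iteratedDeriv_succ, iteratedDeriv_zero]
  ring

lemma cube_mul_thirdLogDerivNumerator {f : 𝕜 → 𝕜} {z : 𝕜} (hf : AnalyticAt 𝕜 f z) :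
    z ^ 3 * thirdLogDerivNumerator f z =
      eulerForm (f z) (eulerOp f z) (eulerOp (eulerOp f) z) (eulerOp (eulerOp (eulerOp f)) z) := by
  rw [eulerOp_eulerOp_eulerOp_eq hf, eulerOp_eulerOp_eq hf, eulerOp, thirdLogDerivNumerator,
    eulerForm]
  ring

lemma exists_eulerOp_eventuallyEq_pow_mul {f g : 𝕜 → 𝕜} {m : ℕ} (hg : AnalyticAt 𝕜 g 0)
    (hf : f =ᶠ[𝓝 0] fun z => z ^ m * g z) :
    ∃ g' : 𝕜 → 𝕜, AnalyticAt 𝕜 g' 0 ∧ g' 0 = m * g 0 ∧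
      eulerOp f =ᶠ[𝓝 0] fun z => z ^ m * g' z := by
  refine ⟨fun z => m * g z + eulerOp g z, analyticAt_const.mul hg |>.add hg.eulerOp,
    by simp [eulerOp], ?_⟩
  filter_upwards [hf.eulerOp, hg.eventually_analyticAt] with z hz hgz
  rw [hz, eulerOp_pow_mul m hgz.differentiableAt]

theorem not_eventually_thirdLogDerivNumerator_eq_zero [CharZero 𝕜] {f : 𝕜 → 𝕜}
    (hf : AnalyticAt 𝕜 f 0) (hf0 : f 0 = 0) (hne : ¬ ∀ᶠ z in 𝓝 0, f z = 0) :
    ¬ ∀ᶠ z in 𝓝 0, thirdLogDerivNumerator f z = 0 := by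
  intro hE
  obtain ⟨m, g, hg, hg0, hfg⟩ := hf.exists_eventuallyEq_pow_smul_nonzero_iff.mpr hne
  simp only [sub_zero, smul_eq_mul] at hfg
  have hm : m ≠ 0 := by
    rintro rfl
    exact hg0 (by simpa [hf0] using hfg.self_of_nhds.symm)
  obtain ⟨g₁, hg₁, hg₁0, hfg₁⟩ := exists_eulerOp_eventuallyEq_pow_mul hg hfg
  obtain ⟨g₂, hg₂, hg₂0, hfg₂⟩ := exists_eulerOp_eventuallyEq_pow_mul hg₁ hfg₁
  obtain ⟨g₃, hg₃, hg₃0, hfg₃⟩ := exists_eulerOp_eventuallyEq_pow_mul hg₂ hfg₂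
  set Q : 𝕜 → 𝕜 := fun z => eulerForm (g z) (g₁ z) (g₂ z) (g₃ z)
  have hQ0 : Q 0 ≠ 0 := by
    rw [show Q 0 = eulerForm (g 0) (g₁ 0) (g₂ 0) (g₃ 0) from rfl, hg₃0, hg₂0, hg₁0,
      eulerForm_iterate_mul]
    exact mul_ne_zero (mul_ne_zero two_ne_zero (Nat.cast_ne_zero.mpr hm)) (pow_ne_zero 4 hg0)
  have hQ : ContinuousAt Q 0 := by
    simp only [Q, eulerForm]
    fun_prop
  have hvanish : ∀ᶠ z in 𝓝 0, (z ^ m) ^ 4 * Q z = 0 := by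
    filter_upwards [hE, hf.eventually_analyticAt, hfg, hfg₁, hfg₂, hfg₃] with z hz hfz h0 h1 h2 h3
    rw [← eulerForm_smul, ← h0, ← h1, ← h2, ← h3, ← cube_mul_thirdLogDerivNumerator hfz, hz,
      mul_zero]
  have hnonvanish : ∀ᶠ z in 𝓝[≠] 0, (z ^ m) ^ 4 * Q z ≠ 0 := by
    filter_upwards [self_mem_nhdsWithin, nhdsWithin_le_nhds (hQ.eventually_ne hQ0)] with z hz hQz
    exact mul_ne_zero (pow_ne_zero 4 (pow_ne_zero m hz)) hQz
  obtain ⟨z, hz, hz'⟩ := ((hvanish.filter_mono nhdsWithin_le_nhds).and hnonvanish).exists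
  exact hz' hz

end CompleteSpace

theorem stmt_10 (f : ℂ → ℂ) (hf : Differentiable ℂ f)
    (hodd : ∀ z : ℂ, f (-z) = -f z)
    (hne : ∃ z : ℂ, f z ≠ 0)
    (hde : ∀ z : ℂ, (deriv f 0) ^ 3 * f (2 * z) =
      f z ^ 3 * iteratedDeriv 3 f z - 3 * f z ^ 2 * deriv f z * iteratedDeriv 2 f z +
        2 * f z * (deriv f z) ^ 3) :
    deriv f 0 ≠ 0 := by
  intro h0
  have hf0 : f 0 = 0 := CharZero.eq_neg_self_iff.mp (by simpa using hodd 0)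
  have hloc : ¬ ∀ᶠ z in 𝓝 0, f z = 0 := fun h => by
    obtain ⟨z, hz⟩ := hne
    have hfa : AnalyticOnNhd ℂ f Set.univ := Complex.analyticOnNhd_univ_iff_differentiable.mpr hf
    exact hz (hfa.eqOn_zero_of_preconnected_of_eventuallyEq_zero isPreconnected_univ
      (Set.mem_univ 0) h (Set.mem_univ z))
  refine not_eventually_thirdLogDerivNumerator_eq_zero (hf.analyticAt 0) hf0 hloc
    (Eventually.of_forall fun z => ?_)
  rw [thirdLogDerivNumerator, ← hde z, h0]
  ring
end

section
/- The function f(z) = z·e^{αz²} (for any α ∈ ℂ) satisfies the differential equation (f'(0))³ f(2z) = f(z)³f'''(z) - 3f(z)²f'(z)f''(z) + 2f(z)f'(z)³ for all z ∈ ℂ. -/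
/-!
Every derivative of `z * exp (α * z ^ 2)` is a polynomial in `z` and `α` times `E = exp (α * z ^ 2)`,
and `exp (α * (2 * z) ^ 2) = E ^ 4`, so the identity reduces to a polynomial identity in `z`, `α`
and `E` (using `f'(0) = 1`).
-/

open Complex

theorem HasDerivAt.mul_cexp_mul_sq {α p' z : ℂ} {p : ℂ → ℂ} (hp : HasDerivAt p p' z) :
    HasDerivAt (fun u => p u * Complex.exp (α * u ^ 2))
      ((p' + 2 * α * z * p z) * Complex.exp (α * z ^ 2)) z := by
  have hexp : HasDerivAt (fun u => Complex.exp (α * u ^ 2))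
      (Complex.exp (α * z ^ 2) * (α * (2 * z))) z := by
    simpa using ((hasDerivAt_pow 2 z).const_mul α).cexp
  exact (hp.fun_mul hexp).congr_deriv (by ring)

theorem deriv_id_mul_cexp_mul_sq (α : ℂ) :
    deriv (fun u => u * exp (α * u ^ 2)) = fun z => (1 + 2 * α * z ^ 2) * exp (α * z ^ 2) := by
  funext z
  exact ((HasDerivAt.mul_cexp_mul_sq (hasDerivAt_id' z)).congr_deriv (by ring)).deriv

theorem iteratedDeriv_two_id_mul_cexp_mul_sq (α : ℂ) :
    iteratedDeriv 2 (fun u => u * exp (α * u ^ 2)) =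
      fun z => (6 * α * z + 4 * α ^ 2 * z ^ 3) * exp (α * z ^ 2) := by
  funext z
  rw [iteratedDeriv_succ, iteratedDeriv_one, deriv_id_mul_cexp_mul_sq]
  have hp : HasDerivAt (fun u : ℂ => 1 + 2 * α * u ^ 2) (2 * α * (2 * z)) z := by
    simpa using ((hasDerivAt_pow 2 z).const_mul (2 * α)).const_add 1
  exact ((HasDerivAt.mul_cexp_mul_sq hp).congr_deriv (by ring)).deriv

theorem iteratedDeriv_three_id_mul_cexp_mul_sq (α : ℂ) :
    iteratedDeriv 3 (fun u => u * exp (α * u ^ 2)) =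
      fun z => (6 * α + 24 * α ^ 2 * z ^ 2 + 8 * α ^ 3 * z ^ 4) * exp (α * z ^ 2) := by
  funext z
  rw [iteratedDeriv_succ, iteratedDeriv_two_id_mul_cexp_mul_sq]
  have hp : HasDerivAt (fun u : ℂ => 6 * α * u + 4 * α ^ 2 * u ^ 3)
      (6 * α + 4 * α ^ 2 * (3 * z ^ 2)) z := by
    simpa using ((hasDerivAt_id z).const_mul (6 * α)).fun_add
      ((hasDerivAt_pow 3 z).const_mul (4 * α ^ 2))
  exact ((HasDerivAt.mul_cexp_mul_sq hp).congr_deriv (by ring)).deriv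

theorem cexp_mul_two_mul_sq (α z : ℂ) : exp (α * (2 * z) ^ 2) = exp (α * z ^ 2) ^ 4 := by
  rw [← exp_nat_mul]
  ring_nf

theorem stmt_14 (α : ℂ) :
    ∀ z : ℂ,
      (deriv (fun u => u * exp (α * u ^ 2)) 0) ^ 3 * (2 * z * exp (α * (2 * z) ^ 2)) =
        (z * exp (α * z ^ 2)) ^ 3 * iteratedDeriv 3 (fun u => u * exp (α * u ^ 2)) z -
          3 * (z * exp (α * z ^ 2)) ^ 2 * deriv (fun u => u * exp (α * u ^ 2)) z *
            iteratedDeriv 2 (fun u => u * exp (α * u ^ 2)) z +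
          2 * (z * exp (α * z ^ 2)) * (deriv (fun u => u * exp (α * u ^ 2)) z) ^ 3 := by
  intro z
  rw [deriv_id_mul_cexp_mul_sq, iteratedDeriv_two_id_mul_cexp_mul_sq,
    iteratedDeriv_three_id_mul_cexp_mul_sq, cexp_mul_two_mul_sq]
  simp only [zero_pow two_ne_zero, mul_zero, add_zero, exp_zero, mul_one, one_pow, one_mul]
  ring
end

section
/- There is no nonzero odd entire function f satisfying the differential equation f(z)³f'''(z) - 3f(z)²f'(z)f''(z) + 2f(z)f'(z)³ = 0 for all z ∈ ℂ (i.e. f⁴·(log f)''' ≡ 0); equivalently, every odd entire solution of this equation is identically zero. -/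
private lemma analyticAt_deriv17 {u : ℂ → ℂ} {x : ℂ} (hu : AnalyticAt ℂ u x) :
    AnalyticAt ℂ (deriv u) x :=
  (AnalyticOnNhd.deriv (fun _ hz => hz : AnalyticOnNhd ℂ u {z | AnalyticAt ℂ u z})) x hu

private lemma step17 (m : ℕ) (g u : ℂ → ℂ) (hu : AnalyticAt ℂ u 0)
    (h : ∀ᶠ z in nhds (0:ℂ), g z = z ^ m * u z) :
    ∃ v : ℂ → ℂ, AnalyticAt ℂ v 0 ∧ v 0 = m * u 0 ∧
      ∀ᶠ z in nhds (0:ℂ), z * deriv g z = z ^ m * v z := by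
  refine ⟨fun z => m * u z + z * deriv u z, ?_, by simp, ?_⟩
  · exact (analyticAt_const.mul hu).add (analyticAt_id.mul (analyticAt_deriv17 hu))
  · filter_upwards [h.eventually_nhds, hu.eventually_analyticAt] with z hz hz'
    have hder : deriv g z = deriv (fun w => w ^ m * u w) z :=
      Filter.EventuallyEq.deriv_eq hz
    rw [hder, deriv_fun_mul (differentiableAt_pow m) hz'.differentiableAt, deriv_pow_field]
    cases m with
    | zero => simp
    | succ k =>
      simp only [Nat.add_sub_cancel]
      push_cast
      ring

theorem stmt_17 (f : ℂ → ℂ) (hf : Differentiable ℂ f)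
    (hodd : ∀ z : ℂ, f (-z) = -f z)
    (hde : ∀ z : ℂ,
      f z ^ 3 * iteratedDeriv 3 f z - 3 * f z ^ 2 * deriv f z * iteratedDeriv 2 f z +
        2 * f z * (deriv f z) ^ 3 = 0) :
    ∀ z : ℂ, f z = 0 := by
  by_contra hc
  push_neg at hc
  obtain ⟨z₀, hz₀⟩ := hc
  have hfa : ∀ z, AnalyticAt ℂ f z := fun z => hf.analyticAt z
  have hf0 : f 0 = 0 := by
    have h0 := hodd 0
    rw [neg_zero] at h0
    linear_combination h0 / 2
  -- the order of f at 0 is a finite natural number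
  have hne : analyticOrderAt f 0 ≠ ⊤ := by
    intro htop
    have hev : ∀ᶠ z in nhds (0:ℂ), f z = 0 := analyticOrderAt_eq_top.mp htop
    have heq : Set.EqOn f 0 Set.univ :=
      AnalyticOnNhd.eqOn_zero_of_preconnected_of_eventuallyEq_zero
        (fun z _ => hfa z) isPreconnected_univ (Set.mem_univ 0)
        (by filter_upwards [hev] with z hz using hz)
    exact hz₀ (heq (Set.mem_univ z₀))
  set m := (analyticOrderAt f 0).toNat with hm
  have hOrd : analyticOrderAt f 0 = m := (ENat.coe_toNat hne).symm
  obtain ⟨u, hu, hu0, hfe⟩ := ((hfa 0).analyticOrderAt_eq_natCast (n := m)).mp hOrd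
  simp only [sub_zero, smul_eq_mul] at hfe
  have hm0 : m ≠ 0 := by
    intro h
    have h0 : f 0 = 0 ^ m * u 0 := hfe.self_of_nhds
    rw [h, pow_zero, one_mul, hf0] at h0
    exact hu0 h0.symm
  have hd1 : Differentiable ℂ (deriv f) :=
    fun z => (analyticAt_deriv17 (hfa z)).differentiableAt
  have hd2 : Differentiable ℂ (deriv (deriv f)) :=
    fun z => (analyticAt_deriv17 (analyticAt_deriv17 (hfa z))).differentiableAt
  -- three applications of step17
  obtain ⟨v₁, hv₁a, hv₁0, hv₁⟩ := step17 m f u hu hfe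
  obtain ⟨v₂, hv₂a, hv₂0, hv₂⟩ := step17 m (fun z => z * deriv f z) v₁ hv₁a hv₁
  have hg1d : ∀ z : ℂ, deriv (fun w => w * deriv f w) z
      = deriv f z + z * deriv (deriv f) z := by
    intro z
    rw [deriv_fun_mul differentiableAt_fun_id (hd1 z)]
    simp
  have h2 : ∀ᶠ z in nhds (0:ℂ), z ^ 2 * deriv (deriv f) z = z ^ m * (v₂ z - v₁ z) := by
    filter_upwards [hv₁, hv₂] with z h1 h2
    rw [hg1d] at h2
    linear_combination h2 - h1
  have hw₂a : AnalyticAt ℂ (fun z => v₂ z - v₁ z) 0 := hv₂a.sub hv₁a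
  obtain ⟨v₃, hv₃a, hv₃0, hv₃⟩ :=
    step17 m (fun z => z ^ 2 * deriv (deriv f) z) _ hw₂a h2
  have hg2d : ∀ z : ℂ, deriv (fun w => w ^ 2 * deriv (deriv f) w) z
      = 2 * z * deriv (deriv f) z + z ^ 2 * deriv (deriv (deriv f)) z := by
    intro z
    rw [deriv_fun_mul (differentiableAt_pow 2) (hd2 z), deriv_pow_field]
    norm_num
  have h3 : ∀ᶠ z in nhds (0:ℂ),
      z ^ 3 * deriv (deriv (deriv f)) z = z ^ m * (v₃ z - 2 * (v₂ z - v₁ z)) := by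
    filter_upwards [h2, hv₃] with z hc2 hc3
    rw [hg2d] at hc3
    linear_combination hc3 - 2 * hc2
  -- the combination P
  set P : ℂ → ℂ := fun z => u z ^ 3 * (v₃ z - 2 * (v₂ z - v₁ z))
      - 3 * u z ^ 2 * v₁ z * (v₂ z - v₁ z) + 2 * u z * v₁ z ^ 3 with hPdef
  have hPa : AnalyticAt ℂ P 0 := by
    apply AnalyticAt.add
    · apply AnalyticAt.sub
      · exact (hu.pow 3).mul (hv₃a.sub (analyticAt_const.mul (hv₂a.sub hv₁a)))
      · exact (((analyticAt_const.mul (hu.pow 2)).mul hv₁a).mul (hv₂a.sub hv₁a))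
    · exact (analyticAt_const.mul hu).mul (hv₁a.pow 3)
  have hP0' : ∀ᶠ z in nhdsWithin (0:ℂ) {(0:ℂ)}ᶜ, P z = 0 := by
    have hall : ∀ᶠ z in nhds (0:ℂ),
        f z = z ^ m * u z ∧ (z * deriv f z = z ^ m * v₁ z ∧
          z ^ 3 * deriv (deriv (deriv f)) z = z ^ m * (v₃ z - 2 * (v₂ z - v₁ z))) ∧
          z ^ 2 * deriv (deriv f) z = z ^ m * (v₂ z - v₁ z) :=
      hfe.and ((hv₁.and h3).and h2)
    filter_upwards [hall.filter_mono nhdsWithin_le_nhds, self_mem_nhdsWithin]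
      with z hz hzne
    obtain ⟨hA, ⟨hB, hD⟩, hC⟩ := hz
    have hzne' : (z:ℂ) ≠ 0 := hzne
    have hE := hde z
    have h2d : iteratedDeriv 2 f = deriv (deriv f) := by
      simp [iteratedDeriv_succ, iteratedDeriv_zero]
    have h3d : iteratedDeriv 3 f = deriv (deriv (deriv f)) := by
      simp [iteratedDeriv_succ, iteratedDeriv_zero]
    rw [h2d, h3d] at hE
    have hE3 : f z ^ 3 * (z ^ 3 * deriv (deriv (deriv f)) z)
        - 3 * f z ^ 2 * (z * deriv f z) * (z ^ 2 * deriv (deriv f) z)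
        + 2 * f z * (z * deriv f z) ^ 3 = 0 := by
      linear_combination z ^ 3 * hE
    rw [hA, hB, hC, hD] at hE3
    have hkey : (z ^ m) ^ 4 * P z = 0 := by
      rw [hPdef]
      linear_combination hE3
    have hzm : (z:ℂ) ^ m ≠ 0 := pow_ne_zero _ hzne'
    exact (mul_eq_zero.mp hkey).resolve_left (pow_ne_zero _ hzm)
  have hcont : Filter.Tendsto P (nhdsWithin (0:ℂ) {(0:ℂ)}ᶜ) (nhds (P 0)) :=
    hPa.continuousAt.continuousWithinAt.tendsto
  have hzero : Filter.Tendsto P (nhdsWithin (0:ℂ) {(0:ℂ)}ᶜ) (nhds 0) :=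
    Filter.Tendsto.congr' (by filter_upwards [hP0'] with z hz using hz.symm)
      tendsto_const_nhds
  have hP00 : P 0 = 0 := tendsto_nhds_unique hcont hzero
  have hval : P 0 = 2 * m * u 0 ^ 4 := by
    simp only [hPdef, hv₃0, hv₂0, hv₁0]
    ring
  rw [hval] at hP00
  have hmc : (m : ℂ) ≠ 0 := Nat.cast_ne_zero.mpr hm0
  exact (mul_ne_zero (mul_ne_zero two_ne_zero hmc) (pow_ne_zero 4 hu0)) hP00
end

section
/- If f₁ and f₂ are odd entire functions with f₁'(0) = f₂'(0) = 1, both satisfying (f'(0))³f(2z) = f(z)³f'''(z) - 3f(z)²f'(z)f''(z) + 2f(z)f'(z)³ for all z ∈ ℂ, and their Taylor expansions at 0 agree up to order 8 (i.e. f₁ - f₂ vanishes to order at least 9 at 0), then f₁ = f₂ identically. -/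
/-!
Pass to Taylor series at `0`: with `A = ∑ f⁽ᵏ⁾(0)/k! Xᵏ` the equation becomes
`A(2X) = A³A‴ - 3A²A′A″ + 2AA′³` in `ℂ⟦X⟧`, where `A = X + O(X²)`. Let two solutions `A`, `B`
agree below degree `n ≥ 3`, and let `c` be the degree-`n` coefficient of `A - B`. Splitting each
product difference, e.g. `A³A‴ - B³B‴ = A³(A - B)‴ + (A - B)(A² + AB + B²)B‴`, only summands in
which `A - B` enters through its lowest term survive in degree `n`, which gives
`2ⁿ c = (n(n-1)(n-2) - 3n(n-1) + 2(3n+1)) c = ((n-1)(n-2)(n-3) + 8) c`.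
For `n ≥ 9` the two factors differ, so `c = 0`; and an entire function is determined by its
Taylor series.
-/

open PowerSeries Finset
open scoped ContDiff Nat

section TaylorSeries

variable {𝕜 : Type*} [NontriviallyNormedField 𝕜] {f g : 𝕜 → 𝕜} {x : 𝕜}

noncomputable def taylorSeries (f : 𝕜 → 𝕜) (x : 𝕜) : 𝕜⟦X⟧ :=
  PowerSeries.mk fun n => iteratedDeriv n f x / n !

@[simp]
lemma coeff_taylorSeries (n : ℕ) : coeff n (taylorSeries f x) = iteratedDeriv n f x / n ! :=
  coeff_mk _ _

lemma taylorSeries_const (c : 𝕜) : taylorSeries (fun _ => c) x = C c := by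
  ext n
  cases n <;> simp [iteratedDeriv_const, coeff_C]

lemma taylorSeries_fun_add (hf : ContDiffAt 𝕜 ∞ f x) (hg : ContDiffAt 𝕜 ∞ g x) :
    taylorSeries (fun z => f z + g z) x = taylorSeries f x + taylorSeries g x := by
  ext n
  simp [iteratedDeriv_fun_add (n := n) (hf.of_le (mod_cast le_top)) (hg.of_le (mod_cast le_top)),
    add_div]

lemma taylorSeries_fun_sub (hf : ContDiffAt 𝕜 ∞ f x) (hg : ContDiffAt 𝕜 ∞ g x) :
    taylorSeries (fun z => f z - g z) x = taylorSeries f x - taylorSeries g x := by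
  ext n
  simp [iteratedDeriv_fun_sub (n := n) (hf.of_le (mod_cast le_top)) (hg.of_le (mod_cast le_top)),
    sub_div]

lemma taylorSeries_fun_mul [CharZero 𝕜] (hf : ContDiffAt 𝕜 ∞ f x) (hg : ContDiffAt 𝕜 ∞ g x) :
    taylorSeries (fun z => f z * g z) x = taylorSeries f x * taylorSeries g x := by
  ext n
  rw [coeff_taylorSeries,
    iteratedDeriv_fun_mul (n := n) (hf.of_le (mod_cast le_top)) (hg.of_le (mod_cast le_top)),
    coeff_mul, Nat.sum_antidiagonal_eq_sum_range_succ_mk, sum_div]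
  refine sum_congr rfl fun k hk => ?_
  have hkn : k ≤ n := Nat.lt_succ_iff.mp (mem_range.mp hk)
  have hfact := n.factorial_ne_zero
  simp only [coeff_taylorSeries]
  rw [Nat.cast_choose 𝕜 hkn]
  field_simp

lemma taylorSeries_fun_pow [CharZero 𝕜] (hf : ContDiffAt 𝕜 ∞ f x) (k : ℕ) :
    taylorSeries (fun z => f z ^ k) x = taylorSeries f x ^ k := by
  induction k with
  | zero => simpa using taylorSeries_const (1 : 𝕜)
  | succ k ih =>
    simp only [pow_succ]
    rw [taylorSeries_fun_mul (hf.pow k) hf, ih]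

lemma taylorSeries_deriv [CharZero 𝕜] :
    taylorSeries (deriv f) x = d⁄dX 𝕜 (taylorSeries f x) := by
  ext n
  rw [coeff_derivative, coeff_taylorSeries, coeff_taylorSeries, ← iteratedDeriv_succ',
    Nat.factorial_succ]
  push_cast
  field_simp

lemma taylorSeries_iteratedDeriv [CharZero 𝕜] (k : ℕ) :
    taylorSeries (iteratedDeriv k f) x = (d⁄dX 𝕜)^[k] (taylorSeries f x) := by
  induction k with
  | zero => simp
  | succ k ih => rw [iteratedDeriv_succ, taylorSeries_deriv, ih, Function.iterate_succ_apply']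

lemma taylorSeries_comp_const_mul (hf : ContDiff 𝕜 ∞ f) (c : 𝕜) :
    taylorSeries (fun z => f (c * z)) 0 = rescale c (taylorSeries f 0) := by
  ext n
  simp [iteratedDeriv_comp_const_mul (n := n) (hf.of_le (mod_cast le_top)), mul_div_assoc]

end TaylorSeries

lemma Complex.eq_of_taylorSeries_eq {f g : ℂ → ℂ} (hf : Differentiable ℂ f)
    (hg : Differentiable ℂ g) {c : ℂ} (h : taylorSeries f c = taylorSeries g c) : f = g := by
  have hcoeff (n : ℕ) : iteratedDeriv n f c = iteratedDeriv n g c := by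
    simpa [Nat.factorial_ne_zero] using congrArg (coeff n) h
  funext z
  rw [← taylorSeries_eq_of_entire' c z hf, ← taylorSeries_eq_of_entire' c z hg]
  simp only [hcoeff]

lemma Nat.descFactorial_three_add_eight_lt_two_pow {n : ℕ} (hn : 9 ≤ n) :
    (n - 1).descFactorial 3 + 8 < 2 ^ n := by
  obtain ⟨m, rfl⟩ := Nat.exists_eq_add_of_le' hn
  rw [show (m + 9 - 1).descFactorial 3 = (m + 8) * (m + 7) * (m + 6) by
    simp [Nat.descFactorial_succ]; ring]
  clear hn
  induction m with
  | zero => norm_num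
  | succ m ih =>
    rw [pow_succ]
    -- `2 (m+8)(m+7)(m+6) - (m+9)(m+8)(m+7) = (m+8)(m+7)(m+3)`
    nlinarith [Nat.zero_le ((m + 8) * (m + 7) * (m + 3))]

namespace PowerSeries

section CommSemiring

variable {R : Type*} [CommSemiring R] {P Q : R⟦X⟧} {p q : ℕ}

lemma coeff_add_mul_of_X_pow_dvd (hP : X ^ p ∣ P) (hQ : X ^ q ∣ Q) :
    coeff (p + q) (P * Q) = coeff p P * coeff q Q := by
  obtain ⟨P, rfl⟩ := hP
  obtain ⟨Q, rfl⟩ := hQ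
  rw [show X ^ p * P * (X ^ q * Q) = X ^ (p + q) * (P * Q) by ring]
  simp [coeff_X_pow_mul']

lemma X_pow_dvd_iterate_derivative {m k : ℕ} (h : X ^ (m + k) ∣ P) :
    X ^ m ∣ (d⁄dX R)^[k] P := by
  rw [X_pow_dvd_iff] at h ⊢
  intro i hi
  rw [coeff_iterate_derivative, h _ (by omega), mul_zero]

lemma coeff_iterate_derivative_eq_descFactorial (P : R⟦X⟧) (m k : ℕ) :
    coeff m ((d⁄dX R)^[k] P) = (m + k).descFactorial k * coeff (m + k) P := by
  rw [coeff_iterate_derivative, Nat.add_descFactorial_eq_ascFactorial]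

lemma coeff_pow_of_X_dvd (h : X ∣ P) (k : ℕ) : coeff k (P ^ k) = coeff 1 P ^ k := by
  induction k with
  | zero => simp
  | succ k ih =>
    rw [pow_succ, coeff_add_mul_of_X_pow_dvd (pow_dvd_pow_of_dvd h k) (by simpa using h), ih,
      pow_succ]

end CommSemiring

variable {R : Type*} [CommRing R] {A B : R⟦X⟧} {n : ℕ}

-- `A⁴ (log A)‴` with the denominators cleared
noncomputable def duplicationRHS (A : R⟦X⟧) : R⟦X⟧ :=
  A ^ 3 * (d⁄dX R)^[3] A - 3 * A ^ 2 * d⁄dX R A * (d⁄dX R)^[2] A + 2 * A * d⁄dX R A ^ 3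

lemma X_sq_dvd_sq_add_mul_add_sq (hA : X ∣ A) (hB : X ∣ B) :
    X ^ 2 ∣ A ^ 2 + A * B + B ^ 2 := by
  obtain ⟨a, rfl⟩ := hA
  obtain ⟨b, rfl⟩ := hB
  exact ⟨a ^ 2 + a * b + b ^ 2, by ring⟩

lemma coeff_pow_three_mul_iterate_derivative_three_sub (hA : X ∣ A) (hB : X ∣ B)
    (hA1 : coeff 1 A = 1) (hn : 3 ≤ n) (hAB : X ^ n ∣ A - B) :
    coeff n (A ^ 3 * (d⁄dX R)^[3] A - B ^ 3 * (d⁄dX R)^[3] B) =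
      n.descFactorial 3 * coeff n (A - B) := by
  obtain ⟨m, rfl⟩ := Nat.exists_eq_add_of_le hn
  have hsplit : A ^ 3 * (d⁄dX R)^[3] A - B ^ 3 * (d⁄dX R)^[3] B =
      A ^ 3 * (d⁄dX R)^[3] (A - B) + (A - B) * (A ^ 2 + A * B + B ^ 2) * (d⁄dX R)^[3] B := by
    rw [iterate_map_sub]
    ring
  have hrest : X ^ (3 + m + 2) ∣ (A - B) * (A ^ 2 + A * B + B ^ 2) * (d⁄dX R)^[3] B := by
    rw [pow_add]
    exact (mul_dvd_mul hAB (X_sq_dvd_sq_add_mul_add_sq hA hB)).mul_right _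
  have hD3 : X ^ m ∣ (d⁄dX R)^[3] (A - B) := X_pow_dvd_iterate_derivative (by rwa [add_comm])
  rw [hsplit, map_add, X_pow_dvd_iff.mp hrest _ (by omega), add_zero,
    coeff_add_mul_of_X_pow_dvd (pow_dvd_pow_of_dvd hA 3) hD3, coeff_pow_of_X_dvd hA, hA1,
    coeff_iterate_derivative_eq_descFactorial, add_comm m 3, one_pow, one_mul]

lemma coeff_sq_mul_derivative_mul_iterate_derivative_two_sub (hA : X ∣ A) (hB : X ∣ B)
    (hA1 : coeff 1 A = 1) (hn : 2 ≤ n) (hAB : X ^ n ∣ A - B) :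
    coeff n (A ^ 2 * d⁄dX R A * (d⁄dX R)^[2] A - B ^ 2 * d⁄dX R B * (d⁄dX R)^[2] B) =
      n.descFactorial 2 * coeff n (A - B) := by
  obtain ⟨m, rfl⟩ := Nat.exists_eq_add_of_le hn
  have hsplit : A ^ 2 * d⁄dX R A * (d⁄dX R)^[2] A - B ^ 2 * d⁄dX R B * (d⁄dX R)^[2] B =
      A ^ 2 * d⁄dX R A * (d⁄dX R)^[2] (A - B) +
        (A ^ 2 * d⁄dX R (A - B) + (A - B) * (A + B) * d⁄dX R B) * (d⁄dX R)^[2] B := by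
    rw [iterate_map_sub, map_sub]
    ring
  have hD1 : X ^ (m + 1) ∣ d⁄dX R (A - B) :=
    X_pow_dvd_iterate_derivative (k := 1) (by rwa [show m + 1 + 1 = 2 + m by omega])
  have hrest : X ^ (2 + m + 1) ∣
      (A ^ 2 * d⁄dX R (A - B) + (A - B) * (A + B) * d⁄dX R B) * (d⁄dX R)^[2] B := by
    refine Dvd.dvd.mul_right (dvd_add ?_ ?_) _
    · rw [add_assoc, pow_add]
      exact mul_dvd_mul (pow_dvd_pow_of_dvd hA 2) hD1
    · rw [pow_succ]
      exact (mul_dvd_mul hAB (dvd_add hA hB)).mul_right _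
  have hD2 : X ^ m ∣ (d⁄dX R)^[2] (A - B) := X_pow_dvd_iterate_derivative (by rwa [add_comm])
  have hlead : coeff 2 (A ^ 2 * d⁄dX R A) = 1 := by
    simpa [coeff_pow_of_X_dvd hA, coeff_derivative, hA1] using
      coeff_add_mul_of_X_pow_dvd (pow_dvd_pow_of_dvd hA 2) (by simp : X ^ 0 ∣ d⁄dX R A)
  rw [hsplit, map_add, X_pow_dvd_iff.mp hrest _ (by omega), add_zero,
    coeff_add_mul_of_X_pow_dvd (dvd_mul_of_dvd_left (pow_dvd_pow_of_dvd hA 2) _) hD2, hlead,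
    coeff_iterate_derivative_eq_descFactorial, add_comm m 2, one_mul]

lemma coeff_mul_derivative_pow_three_sub (hB : X ∣ B) (hA1 : coeff 1 A = 1)
    (hB1 : coeff 1 B = 1) (hn : 1 ≤ n) (hAB : X ^ n ∣ A - B) :
    coeff n (A * d⁄dX R A ^ 3 - B * d⁄dX R B ^ 3) = (3 * n + 1) * coeff n (A - B) := by
  obtain ⟨m, rfl⟩ := Nat.exists_eq_add_of_le hn
  have hDA : constantCoeff (d⁄dX R A) = 1 := by
    simp [← coeff_zero_eq_constantCoeff_apply, coeff_derivative, hA1]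
  have hDB : constantCoeff (d⁄dX R B) = 1 := by
    simp [← coeff_zero_eq_constantCoeff_apply, coeff_derivative, hB1]
  have hsplit : A * d⁄dX R A ^ 3 - B * d⁄dX R B ^ 3 = (A - B) * d⁄dX R A ^ 3 +
      B * (d⁄dX R (A - B) * (d⁄dX R A ^ 2 + d⁄dX R A * d⁄dX R B + d⁄dX R B ^ 2)) := by
    rw [map_sub]
    ring
  have hD1 : X ^ m ∣ d⁄dX R (A - B) :=
    X_pow_dvd_iterate_derivative (k := 1) (by rwa [add_comm])
  have hfirst : coeff (1 + m) ((A - B) * d⁄dX R A ^ 3) = coeff (1 + m) (A - B) := by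
    simpa [hDA] using coeff_add_mul_of_X_pow_dvd hAB (by simp : X ^ 0 ∣ d⁄dX R A ^ 3)
  have hsecond : coeff (1 + m) (B * (d⁄dX R (A - B) *
      (d⁄dX R A ^ 2 + d⁄dX R A * d⁄dX R B + d⁄dX R B ^ 2))) =
        3 * (1 + m) * coeff (1 + m) (A - B) := by
    rw [coeff_add_mul_of_X_pow_dvd (by simpa using hB) (dvd_mul_of_dvd_left hD1 _), hB1, one_mul]
    have := coeff_add_mul_of_X_pow_dvd hD1
      (by simp : X ^ 0 ∣ d⁄dX R A ^ 2 + d⁄dX R A * d⁄dX R B + d⁄dX R B ^ 2)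
    rw [add_zero] at this
    rw [this, coeff_derivative, add_comm m 1]
    simp [hDA, hDB]
    ring
  rw [hsplit, map_add, hfirst, hsecond]
  push_cast
  ring

lemma two_pow_mul_coeff_sub_of_duplication (hA : X ∣ A) (hA1 : coeff 1 A = 1) (hn : 3 ≤ n)
    (hAB : X ^ n ∣ A - B) (hAE : rescale 2 A = duplicationRHS A)
    (hBE : rescale 2 B = duplicationRHS B) :
    2 ^ n * coeff n (A - B) = ((n - 1).descFactorial 3 + 8 : ℕ) * coeff n (A - B) := by
  have hB : X ∣ B := by
    simpa using dvd_sub hA ((dvd_pow_self X (by omega : n ≠ 0)).trans hAB)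
  have hB1 : coeff 1 B = 1 := by
    have := X_pow_dvd_iff.mp hAB 1 (by omega)
    rwa [map_sub, hA1, sub_eq_zero, eq_comm] at this
  have hsplit : duplicationRHS A - duplicationRHS B =
      (A ^ 3 * (d⁄dX R)^[3] A - B ^ 3 * (d⁄dX R)^[3] B) -
        C 3 * (A ^ 2 * d⁄dX R A * (d⁄dX R)^[2] A - B ^ 2 * d⁄dX R B * (d⁄dX R)^[2] B) +
        C 2 * (A * d⁄dX R A ^ 3 - B * d⁄dX R B ^ 3) := by
    simp only [duplicationRHS, map_ofNat]
    ring
  have hcoeff : coeff n (duplicationRHS A - duplicationRHS B) =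
      n.descFactorial 3 * coeff n (A - B) - 3 * (n.descFactorial 2 * coeff n (A - B)) +
        2 * ((3 * n + 1) * coeff n (A - B)) := by
    rw [hsplit, map_add, map_sub, coeff_C_mul, coeff_C_mul,
      coeff_pow_three_mul_iterate_derivative_three_sub hA hB hA1 hn hAB,
      coeff_sq_mul_derivative_mul_iterate_derivative_two_sub hA hB hA1 (by omega) hAB,
      coeff_mul_derivative_pow_three_sub hB hA1 hB1 (by omega) hAB]
  have hE : rescale 2 (A - B) = duplicationRHS A - duplicationRHS B := by
    rw [map_sub, hAE, hBE]
  rw [← coeff_rescale, hE, hcoeff]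
  obtain ⟨m, rfl⟩ := Nat.exists_eq_add_of_le' hn
  simp [Nat.descFactorial_succ]
  ring

theorem eq_of_rescale_two_eq_duplicationRHS [IsDomain R] [CharZero R] (hA : X ∣ A)
    (hA1 : coeff 1 A = 1) (hAE : rescale 2 A = duplicationRHS A)
    (hBE : rescale 2 B = duplicationRHS B) (hagree : ∀ n < 9, coeff n A = coeff n B) :
    A = B := by
  ext n
  induction n using Nat.strong_induction_on with
  | _ n ih =>
    rcases lt_or_ge n 9 with hn | hn
    · exact hagree n hn
    have hAB : X ^ n ∣ A - B := X_pow_dvd_iff.mpr fun k hk => by rw [map_sub, ih k hk, sub_self]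
    have hne : (2 : R) ^ n ≠ ((n - 1).descFactorial 3 + 8 : ℕ) := by
      exact_mod_cast (Nat.descFactorial_three_add_eight_lt_two_pow hn).ne'
    have key := two_pow_mul_coeff_sub_of_duplication hA hA1 (by omega) hAB hAE hBE
    rw [← sub_eq_zero, ← sub_mul, mul_eq_zero, map_sub, sub_eq_zero, sub_eq_zero] at key
    exact key.resolve_left hne

end PowerSeries

lemma rescale_two_taylorSeries_eq_duplicationRHS {f : ℂ → ℂ} (hf : Differentiable ℂ f)
    (hd : deriv f 0 = 1)
    (hde : ∀ z : ℂ, (deriv f 0) ^ 3 * f (2 * z) =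
      f z ^ 3 * iteratedDeriv 3 f z - 3 * f z ^ 2 * deriv f z * iteratedDeriv 2 f z +
        2 * f z * (deriv f z) ^ 3) :
    rescale 2 (taylorSeries f 0) = duplicationRHS (taylorSeries f 0) := by
  have hsmooth (k : ℕ) : ContDiff ℂ ∞ (iteratedDeriv k f) := by
    rw [iteratedDeriv_eq_iterate]
    exact hf.contDiff.iterate_deriv k
  have hf₀ : ContDiff ℂ ∞ f := hf.contDiff
  have hf' : ContDiff ℂ ∞ (deriv f) := iteratedDeriv_one (f := f) ▸ hsmooth 1
  have hf'' := hsmooth 2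
  have hf''' := hsmooth 3
  have hfun : (fun z => f (2 * z)) = fun z => f z ^ 3 * iteratedDeriv 3 f z -
      3 * f z ^ 2 * deriv f z * iteratedDeriv 2 f z + 2 * f z * deriv f z ^ 3 :=
    funext fun z => by simpa [hd] using hde z
  rw [← taylorSeries_comp_const_mul hf₀, hfun]
  simp (disch := fun_prop) only [taylorSeries_fun_add, taylorSeries_fun_sub, taylorSeries_fun_mul,
    taylorSeries_fun_pow, taylorSeries_const, taylorSeries_deriv, taylorSeries_iteratedDeriv]
  simp only [duplicationRHS, map_ofNat C]

theorem stmt_18_general (f₁ f₂ : ℂ → ℂ)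
    (hf₁ : Differentiable ℂ f₁) (hf₂ : Differentiable ℂ f₂)
    (hodd₁ : ∀ z : ℂ, f₁ (-z) = -f₁ z)
    (hd₁ : deriv f₁ 0 = 1) (hd₂ : deriv f₂ 0 = 1)
    (hde₁ : ∀ z : ℂ, (deriv f₁ 0) ^ 3 * f₁ (2 * z) =
      f₁ z ^ 3 * iteratedDeriv 3 f₁ z - 3 * f₁ z ^ 2 * deriv f₁ z * iteratedDeriv 2 f₁ z +
        2 * f₁ z * (deriv f₁ z) ^ 3)
    (hde₂ : ∀ z : ℂ, (deriv f₂ 0) ^ 3 * f₂ (2 * z) =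
      f₂ z ^ 3 * iteratedDeriv 3 f₂ z - 3 * f₂ z ^ 2 * deriv f₂ z * iteratedDeriv 2 f₂ z +
        2 * f₂ z * (deriv f₂ z) ^ 3)
    (hagree : ∀ n : ℕ, n < 9 → iteratedDeriv n f₁ 0 = iteratedDeriv n f₂ 0) :
    f₁ = f₂ := by
  have hX : X ∣ taylorSeries f₁ 0 := by
    rw [X_dvd_iff, ← coeff_zero_eq_constantCoeff_apply, coeff_taylorSeries]
    simpa using Function.Odd.map_zero hodd₁
  have h1 : coeff 1 (taylorSeries f₁ 0) = 1 := by simp [hd₁]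
  refine Complex.eq_of_taylorSeries_eq hf₁ hf₂ <|
    eq_of_rescale_two_eq_duplicationRHS hX h1
      (rescale_two_taylorSeries_eq_duplicationRHS hf₁ hd₁ hde₁)
      (rescale_two_taylorSeries_eq_duplicationRHS hf₂ hd₂ hde₂) fun n hn => ?_
  simp [hagree n hn]

theorem stmt_18 (f₁ f₂ : ℂ → ℂ)
    (hf₁ : Differentiable ℂ f₁) (hf₂ : Differentiable ℂ f₂)
    (hodd₁ : ∀ z : ℂ, f₁ (-z) = -f₁ z) (hodd₂ : ∀ z : ℂ, f₂ (-z) = -f₂ z)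
    (hd₁ : deriv f₁ 0 = 1) (hd₂ : deriv f₂ 0 = 1)
    (hde₁ : ∀ z : ℂ, (deriv f₁ 0) ^ 3 * f₁ (2 * z) =
      f₁ z ^ 3 * iteratedDeriv 3 f₁ z - 3 * f₁ z ^ 2 * deriv f₁ z * iteratedDeriv 2 f₁ z +
        2 * f₁ z * (deriv f₁ z) ^ 3)
    (hde₂ : ∀ z : ℂ, (deriv f₂ 0) ^ 3 * f₂ (2 * z) =
      f₂ z ^ 3 * iteratedDeriv 3 f₂ z - 3 * f₂ z ^ 2 * deriv f₂ z * iteratedDeriv 2 f₂ z +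
        2 * f₂ z * (deriv f₂ z) ^ 3)
    (hagree : ∀ n : ℕ, n < 9 → iteratedDeriv n f₁ 0 = iteratedDeriv n f₂ 0) :
    f₁ = f₂ :=
  stmt_18_general f₁ f₂ hf₁ hf₂ hodd₁ hd₁ hd₂ hde₁ hde₂ hagree
end
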